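/- For every Borel probability measure μ on S one has I_A(μ) ≤ e^{λ_1}, and equality I_A(μ) = e^{λ_1} holds if and only if μ = δ_{e_1} or μ = δ_{−e_1}. -/

import Mathlib

open MeasureTheory Real Filter Topology

noncomputable section

/-- The unit sphere `S = 𝕊^{d-1}` in `ℝ^d`. -/
abbrev Sph (d : ℕ) : Type := Metric.sphere (0 : EuclideanSpace ℝ (Fin d)) 1

variable {d : ℕ}

/-- The bilinear form `⟨x, A y⟩` for the diagonal matrix `A = diag lam`. -/
def qA (lam : Fin d → ℝ) (x y : EuclideanSpace ℝ (Fin d)) : ℝ :=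
  ∑ i, lam i * x i * y i

/-- The interaction kernel `K_A(x,y) = exp ⟨x, A y⟩`. -/
def Kker (lam : Fin d → ℝ) (x y : Sph d) : ℝ :=
  Real.exp (qA lam (x : EuclideanSpace ℝ (Fin d)) (y : EuclideanSpace ℝ (Fin d)))

/-- The interaction energy `I_A(μ)`. -/
def IA (lam : Fin d → ℝ) (μ : Measure (Sph d)) : ℝ :=
  ∫ x, ∫ y, Kker lam x y ∂μ ∂μ

/-- The potential `W_μ(x) = ∫ K_A(x,y) dμ(y)`. -/
def WA (lam : Fin d → ℝ) (μ : Measure (Sph d)) (x : Sph d) : ℝ :=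
  ∫ y, Kker lam x y ∂μ

open scoped Classical in
/-- Relative entropy of `μ` with respect to `ω`, with value `+∞` when `μ` is not
absolutely continuous w.r.t. `ω` or the entropy integral diverges. -/
def Ent (ω μ : Measure (Sph d)) : EReal :=
  if μ ≪ ω ∧ Integrable (fun x => Real.log (μ.rnDeriv ω x).toReal) μ
  then ((∫ x, Real.log (μ.rnDeriv ω x).toReal ∂μ : ℝ) : EReal)
  else ⊤

/-- The free energy `E_{ε,A}(μ) = ε·Ent(μ) − (1/2)·I_A(μ)`. -/
def EA (lam : Fin d → ℝ) (ω : Measure (Sph d)) (ε : ℝ) (μ : Measure (Sph d)) : EReal :=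
  (ε : EReal) * Ent ω μ - ((IA lam μ / 2 : ℝ) : EReal)

/-- The antipodal map on the sphere. -/
def antip (x : Sph d) : Sph d :=
  ⟨-(x : EuclideanSpace ℝ (Fin d)), by
    have hx := x.2
    rw [mem_sphere_zero_iff_norm] at hx ⊢
    rwa [norm_neg]⟩

/-- The sphere self-map induced by a linear isometry equivalence of `ℝ^d`. -/
def sphMap (g : EuclideanSpace ℝ (Fin d) ≃ₗᵢ[ℝ] EuclideanSpace ℝ (Fin d)) (x : Sph d) : Sph d :=
  ⟨g (x : EuclideanSpace ℝ (Fin d)), by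
    have hx := x.2
    rw [mem_sphere_zero_iff_norm] at hx ⊢
    rwa [g.norm_map]⟩

/-- `ω` is the uniform probability measure on the sphere, characterised as a
rotation-invariant Borel probability measure. -/
def IsUniform (ω : Measure (Sph d)) : Prop :=
  IsProbabilityMeasure ω ∧
  ∀ g : EuclideanSpace ℝ (Fin d) ≃ₗᵢ[ℝ] EuclideanSpace ℝ (Fin d),
    Measure.map (sphMap g) ω = ω

/-- The (topological) support of a measure. -/
def msupport (μ : Measure (Sph d)) : Set (Sph d) :=
  {x | ∀ U : Set (Sph d), IsOpen U → x ∈ U → 0 < μ U}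

/-- The set of global maximizers of the potential `W_ν`. -/
def argmaxW (lam : Fin d → ℝ) (ν : Measure (Sph d)) : Set (Sph d) :=
  {x | ∀ y, WA lam ν y ≤ WA lam ν x}

/-- `μ` is a Gibbs critical point of `E_{ε,A}`. -/
def IsGibbs (lam : Fin d → ℝ) (ω : Measure (Sph d)) (ε : ℝ) (μ : Measure (Sph d)) : Prop :=
  IsProbabilityMeasure μ ∧
  μ = ω.withDensity (fun x => ENNReal.ofReal
    (Real.exp (WA lam μ x / ε) / ∫ z, Real.exp (WA lam μ z / ε) ∂ω))

/-- `μ` is a global minimizer of `E_{ε,A}` over Borel probability measures. -/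
def IsMinimizer (lam : Fin d → ℝ) (ω : Measure (Sph d)) (ε : ℝ) (μ : Measure (Sph d)) : Prop :=
  IsProbabilityMeasure μ ∧
  ∀ ν : Measure (Sph d), IsProbabilityMeasure ν → EA lam ω ε μ ≤ EA lam ω ε ν

/-- `m_ε`, the infimum of the free energy over probability measures. -/
def mEps (lam : Fin d → ℝ) (ω : Measure (Sph d)) (ε : ℝ) : EReal :=
  sInf {r : EReal | ∃ μ : Measure (Sph d), IsProbabilityMeasure μ ∧ EA lam ω ε μ = r}

/-!
Because every `λᵢ` is positive, `⟨x - y, A (x - y)⟩ ≥ 0` gives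
`2 ⟨x, A y⟩ ≤ ⟨x, A x⟩ + ⟨y, A y⟩ ≤ 2 λ₁` on the sphere, with equality only if `x = y` and
(because `λᵢ < λ₁` for `i ≥ 2`) `x = ±e₁`. Hence `K_A ≤ e^{λ₁}`. If `I_A(μ) = e^{λ₁}`, the
potential `∫ K_A(x, ·) dμ` equals `e^{λ₁}` for `μ`-a.e. `x`. At one such `x`, `K_A(x, y)` is
maximal for `μ`-a.e. `y`, so `y = x` almost surely and `μ = δ_x` with `x = ±e₁`.
-/

lemma qA_sub_sub (lam : Fin d → ℝ) (x y : EuclideanSpace ℝ (Fin d)) :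
    qA lam (x - y) (x - y) = qA lam x x + qA lam y y - 2 * qA lam x y := by
  simp only [qA, PiLp.sub_apply, Finset.mul_sum, ← Finset.sum_add_distrib, ← Finset.sum_sub_distrib]
  exact Finset.sum_congr rfl fun i _ => by ring

lemma mul_norm_sq_sub_qA_self (lam : Fin d → ℝ) (c : ℝ) (x : EuclideanSpace ℝ (Fin d)) :
    c * ‖x‖ ^ 2 - qA lam x x = ∑ i, (c - lam i) * x i ^ 2 := by
  simp only [qA, EuclideanSpace.real_norm_sq_eq, Finset.mul_sum, ← Finset.sum_sub_distrib]
  exact Finset.sum_congr rfl fun i _ => by ring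

variable {lam : Fin d → ℝ}

lemma qA_self_nonneg (hlam : ∀ i, 0 ≤ lam i) (x : EuclideanSpace ℝ (Fin d)) :
    0 ≤ qA lam x x :=
  Finset.sum_nonneg fun i _ => by nlinarith [hlam i, mul_self_nonneg (x i)]

lemma eq_zero_of_qA_self_eq_zero (hlam : ∀ i, 0 < lam i) {x : EuclideanSpace ℝ (Fin d)}
    (hx : qA lam x x = 0) : x = 0 := by
  have hterm := (Finset.sum_eq_zero_iff_of_nonneg fun i _ =>
    (by nlinarith [hlam i, mul_self_nonneg (x i)] : 0 ≤ lam i * x i * x i)).1 hx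
  ext i
  have := hterm i (Finset.mem_univ i)
  rw [mul_assoc, mul_eq_zero, mul_self_eq_zero] at this
  exact this.resolve_left (hlam i).ne'

lemma two_mul_qA_le (hlam : ∀ i, 0 ≤ lam i) (x y : EuclideanSpace ℝ (Fin d)) :
    2 * qA lam x y ≤ qA lam x x + qA lam y y := by
  linarith [qA_sub_sub lam x y, qA_self_nonneg hlam (x - y)]

lemma qA_self_le {c : ℝ} (hc : ∀ i, lam i ≤ c) (x : EuclideanSpace ℝ (Fin d)) :
    qA lam x x ≤ c * ‖x‖ ^ 2 := by
  have hsum : 0 ≤ ∑ i, (c - lam i) * x i ^ 2 :=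
    Finset.sum_nonneg fun i _ => mul_nonneg (sub_nonneg.2 (hc i)) (sq_nonneg _)
  linarith [mul_norm_sq_sub_qA_self lam c x]

lemma apply_eq_zero_of_qA_self_eq {c : ℝ} (hc : ∀ i, lam i ≤ c) {x : EuclideanSpace ℝ (Fin d)}
    (hx : qA lam x x = c * ‖x‖ ^ 2) {i : Fin d} (hi : lam i < c) : x i = 0 := by
  have hsum : ∑ i, (c - lam i) * x i ^ 2 = 0 := by
    rw [← mul_norm_sq_sub_qA_self, hx, sub_self]
  have := (Finset.sum_eq_zero_iff_of_nonneg fun i _ =>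
    mul_nonneg (sub_nonneg.2 (hc i)) (sq_nonneg (x i))).1 hsum i (Finset.mem_univ i)
  exact pow_eq_zero_iff two_ne_zero |>.1 <| (mul_eq_zero.1 this).resolve_left (sub_pos.2 hi).ne'

lemma qA_le_of_norm_eq_one (hlam : ∀ i, 0 ≤ lam i) {i₀ : Fin d} (htop : ∀ i, lam i ≤ lam i₀)
    {x y : EuclideanSpace ℝ (Fin d)} (hx : ‖x‖ = 1) (hy : ‖y‖ = 1) : qA lam x y ≤ lam i₀ := by
  have hxx := qA_self_le htop x
  have hyy := qA_self_le htop y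
  simp only [hx, hy, one_pow, mul_one] at hxx hyy
  linarith [two_mul_qA_le hlam x y]

lemma eq_single_of_apply_eq_zero {i₀ : Fin d} {x : EuclideanSpace ℝ (Fin d)}
    (hx : ∀ i ≠ i₀, x i = 0) : x = EuclideanSpace.single i₀ (x i₀) := by
  ext i
  by_cases hi : i = i₀
  · subst hi; simp
  · simp [hi, hx i hi]

lemma eq_single_of_qA_eq (hlam : ∀ i, 0 < lam i) {i₀ : Fin d} (htop : ∀ i ≠ i₀, lam i < lam i₀)
    {x y : EuclideanSpace ℝ (Fin d)} (hx : ‖x‖ = 1) (hy : ‖y‖ = 1) (h : qA lam x y = lam i₀) :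
    y = x ∧ (x = EuclideanSpace.single i₀ 1 ∨ x = -EuclideanSpace.single i₀ 1) := by
  have hle : ∀ i, lam i ≤ lam i₀ := fun i =>
    if hi : i = i₀ then hi ▸ le_rfl else (htop i hi).le
  have hxx := qA_self_le hle x
  have hyy := qA_self_le hle y
  simp only [hx, hy, one_pow, mul_one] at hxx hyy
  have h2 := two_mul_qA_le (fun i => (hlam i).le) x y
  have hxy : x - y = 0 := eq_zero_of_qA_self_eq_zero hlam (by linarith [qA_sub_sub lam x y])
  refine ⟨(sub_eq_zero.1 hxy).symm, ?_⟩
  have hx0 : ∀ i ≠ i₀, x i = 0 := fun i hi =>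
    apply_eq_zero_of_qA_self_eq hle (by rw [hx]; linarith) (htop i hi)
  have hxi := eq_single_of_apply_eq_zero hx0
  rw [hxi, PiLp.norm_single, Real.norm_eq_abs] at hx
  rcases abs_eq (zero_le_one' ℝ) |>.1 hx with h1 | h1
  · exact .inl (hxi.trans (by rw [h1]))
  · refine .inr (hxi.trans ?_)
    rw [h1, EuclideanSpace.single, EuclideanSpace.single, PiLp.single_neg]

lemma continuous_Kker (lam : Fin d → ℝ) : Continuous fun p : Sph d × Sph d => Kker lam p.1 p.2 := by
  unfold Kker qA
  fun_prop

lemma Kker_le (hlam : ∀ i, 0 ≤ lam i) {i₀ : Fin d} (htop : ∀ i, lam i ≤ lam i₀) (x y : Sph d) :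
    Kker lam x y ≤ exp (lam i₀) :=
  exp_le_exp.2 <| qA_le_of_norm_eq_one hlam htop (norm_eq_of_mem_sphere x) (norm_eq_of_mem_sphere y)

lemma eq_of_Kker_eq (hlam : ∀ i, 0 < lam i) {i₀ : Fin d} (htop : ∀ i ≠ i₀, lam i < lam i₀)
    {x y : Sph d} (h : Kker lam x y = exp (lam i₀)) : y = x :=
  Subtype.ext (eq_single_of_qA_eq hlam htop (norm_eq_of_mem_sphere x) (norm_eq_of_mem_sphere y)
    (exp_injective h)).1

lemma Kker_self_eq_iff (hlam : ∀ i, 0 < lam i) {i₀ : Fin d} (htop : ∀ i ≠ i₀, lam i < lam i₀)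
    {e : Sph d} (he : (e : EuclideanSpace ℝ (Fin d)) = EuclideanSpace.single i₀ 1) (x : Sph d) :
    Kker lam x x = exp (lam i₀) ↔ x = e ∨ x = antip e := by
  constructor
  · intro h
    rcases (eq_single_of_qA_eq hlam htop (norm_eq_of_mem_sphere x) (norm_eq_of_mem_sphere x)
      (exp_injective h)).2 with hx | hx
    · exact .inl (Subtype.ext (hx.trans he.symm))
    · exact .inr (Subtype.ext (hx.trans (by rw [← he]; rfl)))
  · rintro (rfl | rfl) <;> simp [Kker, qA, antip, he]

section Energy

variable {X : Type*} [MeasurableSpace X] {μ : Measure X} [IsProbabilityMeasure μ]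
  {K : X → X → ℝ} {M : ℝ}

lemma ae_integral_le (hK : Integrable (Function.uncurry K) (μ.prod μ)) (hKM : ∀ x y, K x y ≤ M) :
    ∀ᵐ x ∂μ, ∫ y, K x y ∂μ ≤ M := by
  filter_upwards [hK.prod_right_ae] with x hx
  simpa using integral_mono hx (integrable_const M) (hKM x)

lemma integral_integral_le (hK : Integrable (Function.uncurry K) (μ.prod μ))
    (hKM : ∀ x y, K x y ≤ M) : ∫ x, ∫ y, K x y ∂μ ∂μ ≤ M := by
  simpa using integral_mono_ae hK.integral_prod_left (integrable_const M) (ae_integral_le hK hKM)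

lemma exists_eq_dirac_of_integral_integral_eq (hK : Integrable (Function.uncurry K) (μ.prod μ))
    (hKM : ∀ x y, K x y ≤ M) (hdiag : ∀ x y, K x y = M → y = x)
    (h : ∫ x, ∫ y, K x y ∂μ ∂μ = M) : ∃ x, μ = Measure.dirac x := by
  have hW : (fun x => ∫ y, K x y ∂μ) =ᵐ[μ] fun _ => M :=
    (integral_eq_iff_of_ae_le hK.integral_prod_left (integrable_const M)
      (ae_integral_le hK hKM)).1 (by simpa using h)
  obtain ⟨x, hWx, hKx⟩ := (hW.and hK.prod_right_ae).exists
  have hKxM : (fun y => K x y) =ᵐ[μ] fun _ => M :=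
    (integral_eq_iff_of_ae_le hKx (integrable_const M) (ae_of_all _ (hKM x))).1
      (by simpa using hWx)
  have hx : ∀ᵐ y ∂μ, y = x := hKxM.mono fun y => hdiag x y
  exact ⟨x, by simpa using (ProbabilityTheory.hasLaw_dirac_of_ae_eq (X := id) hx).map_eq⟩

end Energy

lemma IA_dirac (lam : Fin d → ℝ) (x : Sph d) : IA lam (Measure.dirac x) = Kker lam x x := by
  simp [IA]

/-- `I_A(μ) ≤ e^{λ₁}`, with equality iff `μ` is a Dirac at `±e₁`. -/
theorem stmt9 (d : ℕ) (hd : 2 ≤ d) (lam : Fin d → ℝ)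
    (hanti : Antitone lam)
    (hgap : lam ⟨1, by omega⟩ < lam ⟨0, by omega⟩)
    (hpos : ∀ i, 0 < lam i)
    (e1 : Sph d)
    (he1 : (e1 : EuclideanSpace ℝ (Fin d)) = EuclideanSpace.single ⟨0, by omega⟩ 1)
    (μ : Measure (Sph d)) (hμ : IsProbabilityMeasure μ) :
    IA lam μ ≤ Real.exp (lam ⟨0, by omega⟩) ∧
    (IA lam μ = Real.exp (lam ⟨0, by omega⟩) ↔ μ = Measure.dirac e1 ∨ μ = Measure.dirac (antip e1)) := by
  have htop : ∀ i ≠ ⟨0, by omega⟩, lam i < lam ⟨0, by omega⟩ := fun i hi =>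
    (hanti (Fin.le_def.2 (Nat.one_le_iff_ne_zero.2 fun h => hi (Fin.ext h)))).trans_lt hgap
  have hKle := Kker_le (fun i => (hpos i).le) (i₀ := ⟨0, by omega⟩) fun i => hanti (Nat.zero_le _)
  have hK : Integrable (Function.uncurry (Kker lam)) (μ.prod μ) :=
    (continuous_Kker lam).integrable_of_hasCompactSupport (HasCompactSupport.of_compactSpace _)
  refine ⟨integral_integral_le hK hKle, fun h => ?_, ?_⟩
  · obtain ⟨x, rfl⟩ := exists_eq_dirac_of_integral_integral_eq hK hKle
      (fun x y => eq_of_Kker_eq hpos htop) h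
    rw [IA_dirac, Kker_self_eq_iff hpos htop he1] at h
    rcases h with rfl | rfl <;> simp
  · rintro (rfl | rfl) <;> rw [IA_dirac, Kker_self_eq_iff hpos htop he1] <;> simp

end
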